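/- arXiv:1804.00624 — 8 statements merged into one kernel-verified Lean document; each statement's English description precedes it below -/
import Mathlib

section
/- Let F = F_q be a finite field and let A, B ∈ F^{n×n} be matrices such that the column space of B is not contained in the column space of A. Then there exist vectors v, w ∈ F^n such that for all (λ, μ) ∈ F² \ {(0,0)}: if rank(λA + μB) ≤ n−1 then λv + μw ∉ colsp(λA + μB). -/
/-!
For a point `c = [λ : μ]` of the projective line let `U c ⊆ Fⁿ × Fⁿ` be the subspace of pairs
`(v, w)` with `λ v + μ w ∈ colsp (λ A + μ B)`; we need a pair outside `U c` for every singular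
`c`. For distinct points the map `(v, w) ↦ (λ v + μ w, λ' v + μ' w)` is invertible, so
`U c ⊔ U c' = ⊤`, and hence each `U c` with `c ≠ c₀` fills at most a `1/q` of the complement of
`U c₀`. There are at most `q` such `c`, so they cannot cover it unless all `q + 1` points are
singular. In that case take `c₀ = [1 : 0]`: a vector `B y ∉ colsp A` gives the pair `(B y, B y)`,
which lies in `U [0 : 1] ⊓ U [1 : -1]` but not in `U c₀`, and the union bound becomes strict.
-/

open Finset

theorem Set.ncard_biUnion_lt_sum {α ι : Type*} [Finite α] {s : Finset ι} {t : ι → Set α}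
    {j k : ι} (hj : j ∈ s) (hk : k ∈ s) (hjk : j ≠ k) (h : (t j ∩ t k).Nonempty) :
    (⋃ i ∈ s, t i).ncard < ∑ i ∈ s, (t i).ncard := by
  classical
  rw [← insert_erase hj, set_biUnion_insert, sum_insert (notMem_erase j s)]
  have hoverlap : 0 < (t j ∩ ⋃ i ∈ s.erase j, t i).ncard :=
    (Set.ncard_pos).2 (h.mono (Set.inter_subset_inter_right _
      (Set.subset_biUnion_of_mem (u := t) (mem_erase.2 ⟨hjk.symm, hk⟩))))
  have := Set.ncard_union_add_ncard_inter (t j) (⋃ i ∈ s.erase j, t i)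
  have := set_ncard_biUnion_le (s.erase j) t
  omega

section FiniteVectorSpace

variable {F X : Type*} [Field F] [AddCommGroup X] [Module F X] [Finite X]

theorem Submodule.card_mul_card_le_of_ne_top [Finite F] {U : Submodule F X} (hU : U ≠ ⊤) :
    Nat.card F * Nat.card U ≤ Nat.card X := by
  rw [Module.natCard_eq_pow_finrank (K := F) (V := U),
    Module.natCard_eq_pow_finrank (K := F) (V := X), ← pow_succ']
  exact Nat.pow_le_pow_right Nat.card_pos (Submodule.finrank_lt hU)

theorem Submodule.card_inf_mul_card_of_sup_eq_top {U U' : Submodule F X} (h : U ⊔ U' = ⊤) :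
    Nat.card ↥(U ⊓ U') * Nat.card X = Nat.card U * Nat.card U' := by
  have hrank := Submodule.finrank_sup_add_finrank_inf_eq U U'
  rw [h, finrank_top] at hrank
  rw [Module.natCard_eq_pow_finrank (K := F) (V := U),
    Module.natCard_eq_pow_finrank (K := F) (V := U'),
    Module.natCard_eq_pow_finrank (K := F) (V := X),
    Module.natCard_eq_pow_finrank (K := F) (V := ↥(U ⊓ U')), ← pow_add, ← pow_add, add_comm, hrank]

theorem Submodule.card_mul_ncard_sdiff_le [Finite F] {U U₀ : Submodule F X} (hU : U ≠ ⊤)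
    (h : U ⊔ U₀ = ⊤) :
    Nat.card F * ((U : Set X) \ U₀).ncard ≤ ((U₀ : Set X)ᶜ).ncard := by
  have hdiff := Set.ncard_inter_add_ncard_sdiff_eq_ncard (U : Set X) U₀
  rw [Set.ncard_compl]
  rw [← Submodule.coe_inf, ← Nat.card_coe_set_eq, ← Nat.card_coe_set_eq (U : Set X)] at hdiff
  rw [← Nat.card_coe_set_eq (U₀ : Set X)]
  have hinf := card_inf_mul_card_of_sup_eq_top h
  have hle := card_mul_card_le_of_ne_top hU
  have hb : Nat.card U₀ ≤ Nat.card X := Finite.card_subtype_le _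
  -- `|U \ U₀| * |X| = |U| * |U₀ᶜ|`, and `q * |U| ≤ |X|`
  refine Nat.le_of_mul_le_mul_left ?_ (Nat.card_pos (α := X))
  zify [hb] at hdiff hinf hle ⊢
  linear_combination (Nat.card X : ℤ) * (Nat.card F : ℤ) * hdiff - (Nat.card F : ℤ) * hinf +
    mul_le_mul_of_nonneg_right hle (sub_nonneg.2 (Int.ofNat_le.2 hb))

theorem Submodule.exists_notMem_of_sup_eq_top [Finite F] {ι : Type*} {U₀ : Submodule F X}
    (hU₀ : U₀ ≠ ⊤) {s : Finset ι} {U : ι → Submodule F X} (hs : #s ≤ Nat.card F)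
    (hU : ∀ i ∈ s, U i ≠ ⊤) (hsup : ∀ i ∈ s, U i ⊔ U₀ = ⊤)
    (hstrict : #s < Nat.card F ∨ ∃ j ∈ s, ∃ k ∈ s, j ≠ k ∧ ¬ U j ⊓ U k ≤ U₀) :
    ∃ x, x ∉ U₀ ∧ ∀ i ∈ s, x ∉ U i := by
  set G : Set X := (U₀ : Set X)ᶜ
  set T : ι → Set X := fun i => (U i : Set X) \ U₀
  have hq : 0 < Nat.card F := Nat.card_pos
  have hsum : Nat.card F * ∑ i ∈ s, (T i).ncard ≤ #s * G.ncard := calc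
    _ = ∑ i ∈ s, Nat.card F * (T i).ncard := mul_sum _ _ _
    _ ≤ ∑ i ∈ s, G.ncard := sum_le_sum fun i hi => card_mul_ncard_sdiff_le (hU i hi) (hsup i hi)
    _ = #s * G.ncard := by rw [sum_const, smul_eq_mul]
  have hlt : (⋃ i ∈ s, T i).ncard < G.ncard := by
    rcases hstrict with hs' | ⟨j, hj, k, hk, hjk, hnot⟩
    · obtain ⟨x, -, hx⟩ := SetLike.exists_of_lt (lt_top_iff_ne_top.2 hU₀)
      have hG : 0 < G.ncard := (Set.ncard_pos).2 ⟨x, hx⟩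
      refine (set_ncard_biUnion_le s T).trans_lt (Nat.lt_of_mul_lt_mul_left (a := Nat.card F) ?_)
      exact hsum.trans_lt (Nat.mul_lt_mul_of_pos_right hs' hG)
    · obtain ⟨x, ⟨hxj, hxk⟩, hx⟩ := SetLike.not_le_iff_exists.1 hnot
      refine (Set.ncard_biUnion_lt_sum (t := T) hj hk hjk ⟨x, ⟨hxj, hx⟩, hxk, hx⟩).trans_le
        (le_of_mul_le_mul_left (hsum.trans (Nat.mul_le_mul_right _ hs)) hq)
  obtain ⟨x, hxG, hxT⟩ := Set.exists_mem_notMem_of_ncard_lt_ncard hlt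
  exact ⟨x, hxG, fun i hi hxi => hxT (Set.mem_biUnion hi ⟨hxi, hxG⟩)⟩

end FiniteVectorSpace

section Pencil

variable {F M N : Type*} [Field F] [AddCommGroup M] [Module F M] [AddCommGroup N] [Module F N]

def pairComb (c : F × F) : N × N →ₗ[F] N :=
  c.1 • LinearMap.fst F N N + c.2 • LinearMap.snd F N N

@[simp]
theorem pairComb_apply (c : F × F) (x : N × N) : pairComb c x = c.1 • x.1 + c.2 • x.2 := rfl

theorem pairComb_surjective {c : F × F} (hc : c ≠ 0) :
    Function.Surjective (pairComb c : N × N →ₗ[F] N) := by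
  intro u
  by_cases h₁ : c.1 = 0
  · have h₂ : c.2 ≠ 0 := fun h₂ => hc (Prod.ext h₁ h₂)
    exact ⟨(0, c.2⁻¹ • u), by simp [h₂]⟩
  · exact ⟨(c.1⁻¹ • u, 0), by simp [h₁]⟩

theorem ker_pairComb_sup_ker_pairComb {c c' : F × F} (hd : c.1 * c'.2 - c'.1 * c.2 ≠ 0) :
    LinearMap.ker (pairComb c : N × N →ₗ[F] N) ⊔ LinearMap.ker (pairComb c') = ⊤ := by
  refine eq_top_iff.2 fun x _ => Submodule.mem_sup.2 ?_
  set d := c.1 * c'.2 - c'.1 * c.2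
  -- `(c.2 • v, -(c.1 • v))` lies in `ker (pairComb c)`; `v` and `v'` come from Cramer's rule
  set v := -(d⁻¹ • pairComb c' x)
  set v' := d⁻¹ • pairComb c x
  refine ⟨(c.2 • v, -(c.1 • v)), ?_, (c'.2 • v', -(c'.1 • v')), ?_, ?_⟩
  · simp only [LinearMap.mem_ker, pairComb_apply, smul_neg, smul_smul, mul_comm c.1,
      add_neg_cancel]
  · simp only [LinearMap.mem_ker, pairComb_apply, smul_neg, smul_smul, mul_comm c'.1,
      add_neg_cancel]
  · simp only [v, v', pairComb_apply]
    ext <;> simp only [Prod.fst_add, Prod.snd_add] <;> match_scalars <;> field_simp <;> ring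

def pencil (f g : M →ₗ[F] N) (c : F × F) : M →ₗ[F] N := c.1 • f + c.2 • g

/-- The projective line `F ∪ {∞}`: `some t` is the point `[1 : t]` and `none` is `[0 : 1]`. -/
def pencilCoeffs : Option F → F × F
  | some t => (1, t)
  | none => (0, 1)

theorem pencilCoeffs_ne_zero (p : Option F) : pencilCoeffs p ≠ 0 := by
  cases p <;> simp [pencilCoeffs]

theorem pencilCoeffs_det_ne_zero {p p' : Option F} (h : p ≠ p') :
    (pencilCoeffs p).1 * (pencilCoeffs p').2 - (pencilCoeffs p').1 * (pencilCoeffs p).2 ≠ 0 := by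
  cases p <;> cases p' <;> simp_all [pencilCoeffs, sub_eq_zero, eq_comm]

theorem exists_eq_smul_pencilCoeffs {c : F × F} (hc : c ≠ 0) :
    ∃ p : Option F, ∃ a : F, a ≠ 0 ∧ c = a • pencilCoeffs p := by
  by_cases h₁ : c.1 = 0
  · have h₂ : c.2 ≠ 0 := fun h₂ => hc (Prod.ext h₁ h₂)
    exact ⟨none, c.2, h₂, Prod.ext (by simp [pencilCoeffs, h₁]) (by simp [pencilCoeffs])⟩
  · exact ⟨some (c.2 / c.1), c.1, h₁, Prod.ext (by simp [pencilCoeffs])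
      (by simp [pencilCoeffs, mul_div_cancel₀ _ h₁])⟩

theorem pairComb_smul (a : F) (c : F × F) :
    (pairComb (a • c) : N × N →ₗ[F] N) = a • pairComb c := by
  ext x <;> simp [smul_smul]

theorem pencil_smul (f g : M →ₗ[F] N) (a : F) (c : F × F) :
    pencil f g (a • c) = a • pencil f g c := by
  simp [pencil, smul_add, smul_smul]

def pencilPreimage (f g : M →ₗ[F] N) (c : F × F) : Submodule F (N × N) :=
  (LinearMap.range (pencil f g c)).comap (pairComb c)

theorem pencilPreimage_ne_top {f g : M →ₗ[F] N} {c : F × F} (hc : c ≠ 0)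
    (h : LinearMap.range (pencil f g c) ≠ ⊤) : pencilPreimage f g c ≠ ⊤ := fun htop =>
  h <| Submodule.comap_injective_of_surjective (pairComb_surjective hc)
    (htop.trans (Submodule.comap_top _).symm)

theorem pencilPreimage_sup_eq_top (f g : M →ₗ[F] N) {c c' : F × F}
    (hd : c.1 * c'.2 - c'.1 * c.2 ≠ 0) : pencilPreimage f g c ⊔ pencilPreimage f g c' = ⊤ :=
  top_le_iff.1 <| (ker_pairComb_sup_ker_pairComb hd).ge.trans
    (sup_le_sup (LinearMap.ker_le_comap _) (LinearMap.ker_le_comap _))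

theorem not_inf_le_pencilPreimage {f g : M →ₗ[F] N}
    (h : ¬ LinearMap.range g ≤ LinearMap.range f) :
    ¬ pencilPreimage f g (pencilCoeffs none) ⊓ pencilPreimage f g (pencilCoeffs (some (-1))) ≤
      pencilPreimage f g (pencilCoeffs (some 0)) := by
  obtain ⟨-, ⟨y, rfl⟩, hy⟩ := SetLike.not_le_iff_exists.1 h
  refine SetLike.not_le_iff_exists.2 ⟨(g y, g y), ⟨⟨y, ?_⟩, 0, ?_⟩, fun ⟨z, hz⟩ => hy ⟨z, ?_⟩⟩ <;>
    simp_all [pencilPreimage, pencil, pencilCoeffs]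

theorem exists_forall_notMem_pencilPreimage [Fintype F] [Finite N] (f g : M →ₗ[F] N)
    (h : ¬ LinearMap.range g ≤ LinearMap.range f) :
    ∃ x : N × N, ∀ p : Option F, LinearMap.range (pencil f g (pencilCoeffs p)) ≠ ⊤ →
      x ∉ pencilPreimage f g (pencilCoeffs p) := by
  classical
  set U := fun p : Option F => pencilPreimage f g (pencilCoeffs p)
  set D := univ.filter fun p : Option F => LinearMap.range (pencil f g (pencilCoeffs p)) ≠ ⊤
  have hU : ∀ p ∈ D, U p ≠ ⊤ := fun p hp =>
    pencilPreimage_ne_top (pencilCoeffs_ne_zero p) (mem_filter.1 hp).2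
  have hq : Fintype.card (Option F) = Nat.card F + 1 := by
    rw [Fintype.card_option, Nat.card_eq_fintype_card]
  suffices ∃ x, ∀ p ∈ D, x ∉ U p by simpa [D] using this
  rcases D.eq_empty_or_nonempty with hD | ⟨p₁, hp₁⟩
  · exact ⟨0, by simp [hD]⟩
  obtain ⟨p₀, hp₀, hstrict⟩ : ∃ p₀ ∈ D, #(D.erase p₀) < Nat.card F ∨
      ∃ j ∈ D.erase p₀, ∃ k ∈ D.erase p₀, j ≠ k ∧ ¬ U j ⊓ U k ≤ U p₀ := by
    by_cases hfull : D = univ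
    · exact ⟨some 0, by simp [hfull], Or.inr ⟨none, by simp [hfull], some (-1), by simp [hfull],
        by simp, not_inf_le_pencilPreimage h⟩⟩
    · have := (card_lt_iff_ne_univ D).2 hfull
      have := card_pos.2 ⟨p₁, hp₁⟩
      exact ⟨p₁, hp₁, Or.inl (by rw [card_erase_of_mem hp₁]; omega)⟩
  have hs : #(D.erase p₀) ≤ Nat.card F := by
    have := card_le_univ D
    rw [card_erase_of_mem hp₀]
    omega
  obtain ⟨x, hx₀, hx⟩ := Submodule.exists_notMem_of_sup_eq_top (hU p₀ hp₀) hs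
    (fun p hp => hU p (mem_of_mem_erase hp))
    (fun p hp => pencilPreimage_sup_eq_top f g (pencilCoeffs_det_ne_zero (ne_of_mem_erase hp)))
    hstrict
  refine ⟨x, fun p hp => ?_⟩
  rcases eq_or_ne p p₀ with rfl | hne
  · exact hx₀
  · exact hx p (mem_erase.2 ⟨hne, hp⟩)

theorem exists_forall_pairComb_notMem_range_pencil [Fintype F] [Finite N] (f g : M →ₗ[F] N)
    (h : ¬ LinearMap.range g ≤ LinearMap.range f) :
    ∃ x : N × N, ∀ c : F × F, c ≠ 0 → LinearMap.range (pencil f g c) ≠ ⊤ →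
      pairComb c x ∉ LinearMap.range (pencil f g c) := by
  obtain ⟨x, hx⟩ := exists_forall_notMem_pencilPreimage f g h
  refine ⟨x, fun c hc hne hmem => ?_⟩
  obtain ⟨p, a, ha, rfl⟩ := exists_eq_smul_pencilCoeffs hc
  rw [pencil_smul, LinearMap.range_smul _ _ ha] at hne hmem
  rw [pairComb_smul, LinearMap.smul_apply, Submodule.smul_mem_iff _ ha] at hmem
  exact hx p hne hmem

end Pencil

theorem Matrix.range_mulVecLin_ne_top_of_rank_lt {m n F : Type*} [Fintype m] [Fintype n]
    [Field F] {M : Matrix m n F} (hr : M.rank < Fintype.card m) : LinearMap.range M.mulVecLin ≠ ⊤ := by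
  intro htop
  rw [Matrix.rank, htop, finrank_top, Module.finrank_fintype_fun_eq_card] at hr
  exact hr.false

theorem Matrix.mulVecLin_smul_add_smul {m n F : Type*} [Fintype n] [Field F]
    (A B : Matrix m n F) (lam mu : F) :
    (lam • A + mu • B).mulVecLin = pencil A.mulVecLin B.mulVecLin (lam, mu) := by
  ext x : 1
  simp [pencil]

theorem stmt2_general {F : Type*} [Field F] [Fintype F] {n : ℕ}
    (A B : Matrix (Fin n) (Fin n) F)
    (h : ¬ LinearMap.range B.mulVecLin ≤ LinearMap.range A.mulVecLin) :
    ∃ v w : Fin n → F, ∀ lam mu : F, (lam, mu) ≠ (0, 0) →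
      (lam • A + mu • B).rank ≤ n - 1 →
      lam • v + mu • w ∉ LinearMap.range (lam • A + mu • B).mulVecLin := by
  have hn : 0 < n := Nat.pos_of_ne_zero fun hn₀ => h fun x _ => by
    subst hn₀
    simp [Subsingleton.elim x 0]
  obtain ⟨⟨v, w⟩, hx⟩ := exists_forall_pairComb_notMem_range_pencil A.mulVecLin B.mulVecLin h
  refine ⟨v, w, fun lam mu hne hrank => ?_⟩
  have hrange := Matrix.range_mulVecLin_ne_top_of_rank_lt
    (hrank.trans_lt (by rw [Fintype.card_fin]; omega))
  rw [Matrix.mulVecLin_smul_add_smul] at hrange ⊢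
  exact hx (lam, mu) hne hrange

/-- If `colsp B ⊄ colsp A`, there exist `v, w` such that for every `(λ,μ) ≠ (0,0)`
with `rank(λA + μB) ≤ n−1`, the vector `λv + μw` is not in the column space of
`λA + μB`. -/
theorem stmt2 {F : Type*} [Field F] [Fintype F] [DecidableEq F] {n : ℕ}
    (A B : Matrix (Fin n) (Fin n) F)
    (h : ¬ LinearMap.range B.mulVecLin ≤ LinearMap.range A.mulVecLin) :
    ∃ v w : Fin n → F, ∀ lam mu : F, (lam, mu) ≠ (0, 0) →
      (lam • A + mu • B).rank ≤ n - 1 →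
      lam • v + mu • w ∉ LinearMap.range (lam • A + mu • B).mulVecLin :=
  stmt2_general A B h
end

section
/- For every n ≥ 2 and every finite field F_q, there exist three linearly independent upper triangular matrices A_1, A_2, A_3 ∈ F_q^{n×n} such that every nonzero F_q-linear combination λ_1 A_1 + λ_2 A_2 + λ_3 A_3 has rank at least n−1. -/
/-!
Take `A₁ = 1`, `A₂` the shift, and for `A₃` the band matrix whose odd rows carry `1, v, w` on
the diagonal and the two superdiagonals and whose even rows carry a single `1` on the second
superdiagonal (rows counted from `0`). A nonzero combination is a band matrix with 2-periodic
coefficients, and solving `M g = 0` from the bottom row up shows that its kernel meets a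
coordinate hyperplane trivially, so its rank is at least `n - 1`. Each coordinate of `g` is
forced to vanish either by a nonzero diagonal entry or, when every other diagonal entry vanishes,
by a `2 × 2` system whose determinant is a homogenized value of `x² + v x - 1` or `x² - v x + w`;
`v` and `w` are chosen so that these quadratics have no root in `F`.
-/

open Matrix Finset

lemma exists_forall_ne_of_apply_eq {α : Type*} [Finite α] {f : α → α} {a b : α}
    (hab : a ≠ b) (h : f a = f b) : ∃ y, ∀ x, f x ≠ y := by
  by_contra! hsurj
  exact hab (Finite.injective_iff_surjective.mpr hsurj h)

section FiniteField

variable {F : Type*} [Field F] [Finite F]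

lemma exists_forall_sq_add_mul_sub_one_ne_zero : ∃ v : F, ∀ x, x ^ 2 + v * x - 1 ≠ 0 := by
  -- `0` and `1` have the same image because `0⁻¹ = 0`
  obtain ⟨v, hv⟩ := exists_forall_ne_of_apply_eq (f := fun x : F => (1 - x ^ 2) / x)
    zero_ne_one (by simp)
  refine ⟨v, fun x hx => hv x ?_⟩
  have hx0 : x ≠ 0 := by rintro rfl; simp at hx
  field_simp
  linear_combination -hx

lemma exists_forall_sq_sub_mul_add_ne_zero {v : F} (hv : v ≠ 0) :
    ∃ w : F, ∀ x, x ^ 2 - v * x + w ≠ 0 := by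
  obtain ⟨w, hw⟩ := exists_forall_ne_of_apply_eq (f := fun x : F => v * x - x ^ 2)
    hv.symm (by ring)
  exact ⟨w, fun x hx => hw x (by linear_combination -hx)⟩

end FiniteField

lemma Matrix.card_sub_one_le_rank {F m ι : Type*} [Field F] [Fintype m] [Fintype ι]
    (M : Matrix m ι F) (j₀ : ι) (h : ∀ g, M *ᵥ g = 0 → g j₀ = 0 → g = 0) :
    Fintype.card ι - 1 ≤ M.rank := by
  have hinj :
      Function.Injective ((LinearMap.proj j₀).comp (LinearMap.ker M.mulVecLin).subtype) := by
    rw [← LinearMap.ker_eq_bot, LinearMap.ker_eq_bot']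
    rintro ⟨g, hg⟩ hgj
    exact Subtype.ext (h g hg hgj)
  have hker := LinearMap.finrank_le_finrank_of_injective hinj
  have := M.mulVecLin.finrank_range_add_finrank_ker
  rw [Module.finrank_fintype_fun_eq_card] at this
  rw [Module.finrank_self] at hker
  unfold Matrix.rank
  omega

lemma Nat.eq_zero_of_forall_gt_eq_zero {M : Type*} [Zero M] {G : ℕ → M} {N : ℕ}
    (hN : ∀ k ≥ N, G k = 0) (hstep : ∀ k, (∀ k' > k, G k' = 0) → G k = 0) (k : ℕ) :
    G k = 0 := by
  induction h : N - k using Nat.strong_induction_on generalizing k with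
  | _ r ih =>
    by_cases hk : N ≤ k
    · exact hN k hk
    · exact hstep k fun k' hk' => ih (N - k') (by omega) k' rfl

section Band

variable {F : Type*} [Field F] {n : ℕ}

def Fin.extendByZero (g : Fin n → F) (k : ℕ) : F := if h : k < n then g ⟨k, h⟩ else 0

lemma Fin.extendByZero_of_le (g : Fin n → F) {k : ℕ} (hk : n ≤ k) : Fin.extendByZero g k = 0 :=
  dif_neg (by omega)

lemma Fin.sum_ite_val_eq_mul (g : Fin n → F) (K : ℕ) (x : F) :
    ∑ j : Fin n, (if (j : ℕ) = K then x else 0) * g j = x * Fin.extendByZero g K := by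
  unfold Fin.extendByZero
  split_ifs with hK
  · rw [Finset.sum_eq_single ⟨K, hK⟩
      (fun j _ hj => by rw [if_neg (fun h => hj (Fin.ext h)), zero_mul]) (by simp)]
    simp
  · simp [show ∀ j : Fin n, (j : ℕ) ≠ K from fun j h => hK (h ▸ j.isLt)]

def band (d u e : ℕ → F) : Matrix (Fin n) (Fin n) F :=
  Matrix.of fun i j => if (j : ℕ) = i then d i else if (j : ℕ) = i + 1 then u i
    else if (j : ℕ) = i + 2 then e i else 0

lemma blockTriangular_band (d u e : ℕ → F) :
    (band d u e : Matrix (Fin n) (Fin n) F).BlockTriangular id := by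
  intro i j hij
  have : (j : ℕ) < i := hij
  simp only [band, of_apply]
  split_ifs <;> first | rfl | omega

lemma mulVec_band (d u e : ℕ → F) (g : Fin n → F) (i : Fin n) :
    (band d u e *ᵥ g) i = d i * Fin.extendByZero g i + u i * Fin.extendByZero g (i + 1)
      + e i * Fin.extendByZero g (i + 2) := by
  have hentry : ∀ j : Fin n, band d u e i j = (if (j : ℕ) = i then d i else 0)
      + (if (j : ℕ) = i + 1 then u i else 0) + (if (j : ℕ) = i + 2 then e i else 0) := by
    intro j
    simp only [band, of_apply]
    split_ifs <;> first | omega | simp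
  simp only [mulVec, dotProduct, hentry, add_mul, sum_add_distrib, Fin.sum_ite_val_eq_mul]

/-- The rows of `band d u e *ᵥ g = 0`, for `G` the extension of `g` by zero, can be solved from
the bottom up once the coordinate `j₀` is fixed to `0`. -/
def BackSubstitutes (d u e : ℕ → F) (j₀ : ℕ) : Prop :=
  ∀ G : ℕ → F, (∀ i, d i * G i + u i * G (i + 1) + e i * G (i + 2) = 0) → G j₀ = 0 →
    ∀ k, (∀ k' > k, G k' = 0) → G k = 0

variable {d u e : ℕ → F}

lemma le_rank_band {j₀ : ℕ} (hj₀ : j₀ < n) (h : BackSubstitutes d u e j₀) :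
    n - 1 ≤ (band d u e : Matrix (Fin n) (Fin n) F).rank := by
  simpa using (band d u e).card_sub_one_le_rank ⟨j₀, hj₀⟩ fun g hg hgj => by
    set G := Fin.extendByZero g
    have hrec : ∀ i, d i * G i + u i * G (i + 1) + e i * G (i + 2) = 0 := by
      intro i
      by_cases hi : i < n
      · simpa [mulVec_band] using congrFun hg ⟨i, hi⟩
      · simp only [G, Fin.extendByZero_of_le g (k := i) (by omega),
          Fin.extendByZero_of_le g (k := i + 1) (by omega),
          Fin.extendByZero_of_le g (k := i + 2) (by omega), mul_zero, add_zero]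
    have hG := Nat.eq_zero_of_forall_gt_eq_zero (fun k hk => Fin.extendByZero_of_le g hk)
      (h G hrec (by simpa [G, Fin.extendByZero, hj₀] using hgj))
    funext j
    simpa [G, Fin.extendByZero] using hG j

lemma eq_zero_of_row {G : ℕ → F} {k : ℕ}
    (hrow : d k * G k + u k * G (k + 1) + e k * G (k + 2) = 0) (hlater : ∀ k' > k, G k' = 0)
    (hdk : d k ≠ 0) : G k = 0 := by
  rw [hlater (k + 1) (by omega), hlater (k + 2) (by omega), mul_zero, mul_zero, add_zero,
    add_zero] at hrow
  exact (mul_eq_zero.mp hrow).resolve_left hdk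

lemma backSubstitutes_of_forall_ne_zero (hd : ∀ k, d k ≠ 0) (j₀ : ℕ) :
    BackSubstitutes d u e j₀ :=
  fun _ hrec _ k hlater => eq_zero_of_row (hrec k) hlater (hd k)

lemma backSubstitutes_of_forall_eq_zero (hd : ∀ k, d k = 0) (hu : ∀ k, u k ≠ 0) :
    BackSubstitutes d u e 0 := by
  intro G hrec hG0 k hlater
  obtain _ | j := k
  · exact hG0
  · have hrow := hrec j
    rw [hd, hlater (j + 2) (by omega), zero_mul, zero_add, mul_zero, add_zero] at hrow
    exact (mul_eq_zero.mp hrow).resolve_left (hu j)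

lemma backSubstitutes_of_alternating (p : ℕ) (hd₀ : ∀ k, k % 2 = p → d k = 0)
    (hd : ∀ k, k % 2 ≠ p → d k ≠ 0)
    (hdet : ∀ k, k % 2 = p → u k * u (k + 1) ≠ e k * d (k + 1)) :
    BackSubstitutes d u e p := by
  intro G hrec hGp k hlater
  by_cases hk : k % 2 = p
  · obtain rfl | ⟨j, rfl⟩ : k = p ∨ ∃ j, k = j + 2 :=
      (Nat.lt_or_ge k 2).imp (fun _ => by omega) fun _ => ⟨k - 2, by omega⟩
    · exact hGp
    · have hj : j % 2 = p := by omega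
      have hrow := hrec j
      have hnext := hrec (j + 1)
      rw [hd₀ j hj, zero_mul, zero_add] at hrow
      rw [hlater (j + 1 + 2) (by omega), mul_zero, add_zero] at hnext
      -- eliminate `G (j + 1)` from rows `j` and `j + 1`
      have hcomb : (u j * u (j + 1) - e j * d (j + 1)) * G (j + 2) = 0 := by
        linear_combination u j * hnext - d (j + 1) * hrow
      exact (mul_eq_zero.mp hcomb).resolve_left (sub_ne_zero.mpr (hdet j hj))
  · exact eq_zero_of_row (hrec k) hlater (hd k hk)

def byParity (even odd : F) (k : ℕ) : F := if k % 2 = 1 then odd else even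

lemma smul_band_add_smul_band_add_smul_band (v w l₁ l₂ l₃ : F) :
    l₁ • band 1 0 0 + l₂ • band 0 1 0 + l₃ • band (byParity 0 1) (byParity 0 v) (byParity 1 w)
      = (band (byParity l₁ (l₁ + l₃)) (byParity l₂ (l₂ + l₃ * v)) (byParity l₃ (l₃ * w)) :
          Matrix (Fin n) (Fin n) F) := by
  ext i j
  simp only [band, byParity, Matrix.add_apply, Matrix.smul_apply, of_apply, smul_eq_mul,
    Pi.one_apply, Pi.zero_apply]
  split_ifs <;> first | omega | ring

lemma linearIndependent_band (hn : 2 ≤ n) (v w : F) :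
    LinearIndependent F ![band 1 0 0, band 0 1 0,
      (band (byParity 0 1) (byParity 0 v) (byParity 1 w) : Matrix (Fin n) (Fin n) F)] := by
  rw [Fintype.linearIndependent_iff]
  intro l hl
  simp only [Fin.sum_univ_three, cons_val_zero, cons_val_one, cons_val_two, tail_cons, head_cons,
    smul_band_add_smul_band_add_smul_band] at hl
  have h00 := congrFun (congrFun hl ⟨0, by omega⟩) ⟨0, by omega⟩
  have h01 := congrFun (congrFun hl ⟨0, by omega⟩) ⟨1, by omega⟩
  have h11 := congrFun (congrFun hl ⟨1, by omega⟩) ⟨1, by omega⟩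
  simp [band, byParity] at h00 h01 h11
  intro i
  fin_cases i
  · exact h00
  · exact h01
  · simpa [h00] using h11

lemma sub_one_le_rank_band_byParity (hn : 2 ≤ n) {v w : F} (hv : ∀ x, x ^ 2 + v * x - 1 ≠ 0)
    (hw : ∀ x, x ^ 2 - v * x + w ≠ 0) {l₁ l₂ l₃ : F} (hl : ¬(l₁ = 0 ∧ l₂ = 0 ∧ l₃ = 0)) :
    n - 1 ≤ (band (byParity l₁ (l₁ + l₃)) (byParity l₂ (l₂ + l₃ * v)) (byParity l₃ (l₃ * w)) :
      Matrix (Fin n) (Fin n) F).rank := by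
  -- the diagonal is `l₁, l₁ + l₃, l₁, …`; the cases are according to which of its entries vanish
  by_cases h₁ : l₁ = 0
  · subst h₁
    by_cases h₃ : l₃ = 0
    · subst h₃
      have h₂ : l₂ ≠ 0 := by tauto
      refine le_rank_band (j₀ := 0) (by omega) (backSubstitutes_of_forall_eq_zero ?_ ?_)
      · simp [byParity]
      · intro k; simp only [byParity]; split_ifs <;> simpa
    · refine le_rank_band (j₀ := 0) (by omega) (backSubstitutes_of_alternating 0 ?_ ?_ ?_)
      · intro k hk; simp [byParity, hk]
      · intro k hk; simpa [byParity, show k % 2 = 1 by omega]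
      · intro k hk hdet
        simp only [byParity, hk, show (k + 1) % 2 = 1 by omega, zero_ne_one, if_true, if_false,
          zero_add] at hdet
        apply hv (l₂ / l₃)
        field_simp
        linear_combination hdet
  · by_cases h₁₃ : l₁ + l₃ = 0
    · refine le_rank_band (j₀ := 1) (by omega) (backSubstitutes_of_alternating 1 ?_ ?_ ?_)
      · intro k hk; simpa [byParity, hk]
      · intro k hk; simpa [byParity, hk]
      · intro k hk hdet
        simp only [byParity, hk, show (k + 1) % 2 = 0 by omega, zero_ne_one, if_true,
          if_false] at hdet
        apply hw (l₂ / l₁)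
        field_simp
        linear_combination hdet + (l₁ * w - v * l₂) * h₁₃
    · refine le_rank_band (j₀ := 0) (by omega) (backSubstitutes_of_forall_ne_zero ?_ 0)
      intro k; simp only [byParity]; split_ifs <;> assumption

end Band

/-- For every `n ≥ 2` and finite field `F`, there exist three linearly independent
upper triangular `n×n` matrices all of whose nonzero linear combinations have rank
at least `n − 1`. -/
theorem stmt3 {F : Type*} [Field F] [Fintype F] {n : ℕ} (hn : 2 ≤ n) :
    ∃ A₁ A₂ A₃ : Matrix (Fin n) (Fin n) F,
      A₁.BlockTriangular id ∧ A₂.BlockTriangular id ∧ A₃.BlockTriangular id ∧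
      LinearIndependent F ![A₁, A₂, A₃] ∧
      ∀ l₁ l₂ l₃ : F, ¬(l₁ = 0 ∧ l₂ = 0 ∧ l₃ = 0) →
        n - 1 ≤ (l₁ • A₁ + l₂ • A₂ + l₃ • A₃).rank := by
  obtain ⟨v, hv⟩ := exists_forall_sq_add_mul_sub_one_ne_zero (F := F)
  have hv₀ : v ≠ 0 := fun h => hv 1 (by rw [h]; ring)
  obtain ⟨w, hw⟩ := exists_forall_sq_sub_mul_add_ne_zero hv₀
  refine ⟨band 1 0 0, band 0 1 0, band (byParity 0 1) (byParity 0 v) (byParity 1 w),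
    blockTriangular_band _ _ _, blockTriangular_band _ _ _, blockTriangular_band _ _ _,
    linearIndependent_band hn v w, fun l₁ l₂ l₃ hl => ?_⟩
  rw [smul_band_add_smul_band_add_smul_band]
  exact sub_one_le_rank_band_byParity hn hv hw hl
end

section
/- Let F be a field, f ∈ F[x_1,...,x_n] a nonzero polynomial of total degree d, and S a finite subset of F. If s_1,...,s_n are chosen independently and uniformly at random from S, then the probability that f(s_1,...,s_n) = 0 is at most d/|S|. Equivalently, the number of zeros of f in Sⁿ is at most d·|S|^{n−1}. -/
open MvPolynomial Finset in
private lemma sz_aux {F : Type*} [Field F] [DecidableEq F] (S : Finset F) :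
    ∀ {n : ℕ} (f : MvPolynomial (Fin n) F), f ≠ 0 →
    ((Fintype.piFinset fun _ : Fin n => S).filter
        fun s => MvPolynomial.eval s f = 0).card * S.card
      ≤ f.totalDegree * S.card ^ n := by
  intro n
  induction n with
  | zero =>
    intro f hf
    obtain ⟨c, rfl⟩ := C_surjective (Fin 0) f
    have hc : c ≠ 0 := fun h => hf (by simp [h])
    have hemp : ((Fintype.piFinset fun _ : Fin 0 => S).filter
        fun s => MvPolynomial.eval s (C c) = 0) = ∅ :=
      Finset.filter_eq_empty_iff.mpr fun s _ => by simpa using hc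
    rw [hemp]
    simp
  | succ n ih =>
    intro f hf
    set d := f.totalDegree with hd
    set p := finSuccEquiv F n f with hp
    have hp0 : p ≠ 0 := by
      rw [hp]
      intro h
      exact hf ((map_eq_zero_iff _ (finSuccEquiv F n).injective).mp h)
    set k := p.natDegree with hk
    set g := p.leadingCoeff with hg
    have hg0 : g ≠ 0 := Polynomial.leadingCoeff_ne_zero.mpr hp0
    have hgc : p.coeff k = g := Polynomial.coeff_natDegree
    have hdeg : g.totalDegree + k ≤ d := by
      have := totalDegree_coeff_finSuccEquiv_add_le f k
        (by rw [← hp, hgc]; exact hg0)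
      rw [← hp, hgc] at this
      exact this
    set T' := Fintype.piFinset fun _ : Fin n => S with hT'
    have hsub : ((Fintype.piFinset fun _ : Fin (n+1) => S).filter
          fun s => MvPolynomial.eval s f = 0) ⊆
        T'.biUnion fun s' =>
          (S.filter fun y => MvPolynomial.eval (Fin.cons y s') f = 0).image
            fun y => Fin.cons y s' := by
      intro s hs
      rw [Finset.mem_filter, Fintype.mem_piFinset] at hs
      refine Finset.mem_biUnion.mpr ⟨Fin.tail s, Fintype.mem_piFinset.mpr fun i => hs.1 _, ?_⟩
      refine Finset.mem_image.mpr ⟨s 0, Finset.mem_filter.mpr ⟨hs.1 0, ?_⟩, Fin.cons_self_tail s⟩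
      rw [Fin.cons_self_tail]; exact hs.2
    have hcard : ((Fintype.piFinset fun _ : Fin (n+1) => S).filter
          fun s => MvPolynomial.eval s f = 0).card
        ≤ ∑ s' ∈ T', (S.filter fun y => MvPolynomial.eval (Fin.cons y s') f = 0).card :=
      (Finset.card_le_card hsub).trans (Finset.card_biUnion_le.trans
        (Finset.sum_le_sum fun _ _ => Finset.card_image_le))
    have hsplit := Finset.sum_filter_add_sum_filter_not T'
      (fun s' => MvPolynomial.eval s' g = 0)
      (fun s' => (S.filter fun y => MvPolynomial.eval (Fin.cons y s') f = 0).card)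
    have hbound1 : ∑ s' ∈ T'.filter (fun s' => MvPolynomial.eval s' g = 0),
        (S.filter fun y => MvPolynomial.eval (Fin.cons y s') f = 0).card
        ≤ (T'.filter fun s' => MvPolynomial.eval s' g = 0).card * S.card := by
      calc ∑ s' ∈ T'.filter (fun s' => MvPolynomial.eval s' g = 0),
            (S.filter fun y => MvPolynomial.eval (Fin.cons y s') f = 0).card
          ≤ ∑ _s' ∈ T'.filter (fun s' => MvPolynomial.eval s' g = 0), S.card :=
            Finset.sum_le_sum fun _ _ => Finset.card_filter_le _ _
        _ = _ := by rw [Finset.sum_const, smul_eq_mul]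
    have hbound2 : ∑ s' ∈ T'.filter (fun s' => ¬ MvPolynomial.eval s' g = 0),
        (S.filter fun y => MvPolynomial.eval (Fin.cons y s') f = 0).card
        ≤ S.card ^ n * k := by
      have hTcard : T'.card = S.card ^ n := by
        simp [hT', Fintype.card_piFinset]
      calc ∑ s' ∈ T'.filter (fun s' => ¬ MvPolynomial.eval s' g = 0),
            (S.filter fun y => MvPolynomial.eval (Fin.cons y s') f = 0).card
          ≤ ∑ _s' ∈ T'.filter (fun s' => ¬ MvPolynomial.eval s' g = 0), k := by
            refine Finset.sum_le_sum fun s' hs' => ?_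
            rw [Finset.mem_filter] at hs'
            set q := p.map (MvPolynomial.eval s') with hq
            have hqc : q.coeff k = MvPolynomial.eval s' g := by
              rw [hq, Polynomial.coeff_map, hgc]
            have hq0 : q ≠ 0 := fun h => hs'.2 (by rw [← hqc, h, Polynomial.coeff_zero])
            have hsubr : (S.filter fun y => MvPolynomial.eval (Fin.cons y s') f = 0)
                ⊆ q.roots.toFinset := by
              intro y hy
              rw [Finset.mem_filter] at hy
              rw [Multiset.mem_toFinset, Polynomial.mem_roots hq0, Polynomial.IsRoot]
              have := hy.2
              rw [eval_eq_eval_mv_eval'] at this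
              exact this
            calc (S.filter fun y => MvPolynomial.eval (Fin.cons y s') f = 0).card
                ≤ q.roots.toFinset.card := Finset.card_le_card hsubr
              _ ≤ Multiset.card q.roots := Multiset.toFinset_card_le _
              _ ≤ q.natDegree := Polynomial.card_roots' q
              _ ≤ k := Polynomial.natDegree_map_le
        _ = (T'.filter fun s' => ¬ MvPolynomial.eval s' g = 0).card * k := by
            rw [Finset.sum_const, smul_eq_mul]
        _ ≤ S.card ^ n * k :=
            Nat.mul_le_mul_right _ (hTcard ▸ Finset.card_filter_le _ _)
    have hih := ih g hg0
    calc ((Fintype.piFinset fun _ : Fin (n+1) => S).filter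
            fun s => MvPolynomial.eval s f = 0).card * S.card
        ≤ ((T'.filter fun s' => MvPolynomial.eval s' g = 0).card * S.card
            + S.card ^ n * k) * S.card := by
          refine Nat.mul_le_mul_right _ (hcard.trans ?_)
          rw [← hsplit]
          exact Nat.add_le_add hbound1 hbound2
      _ ≤ (g.totalDegree * S.card ^ n + S.card ^ n * k) * S.card :=
          Nat.mul_le_mul_right _ (Nat.add_le_add_right hih _)
      _ = (g.totalDegree + k) * S.card ^ (n + 1) := by ring
      _ ≤ d * S.card ^ (n + 1) := Nat.mul_le_mul_right _ hdeg

/-- Schwartz–Zippel lemma (counting form): a nonzero polynomial `f` in `n` variables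
of total degree `d` has at most `d·|S|^{n−1}` zeros in `Sⁿ`; equivalently, the
probability that `f` vanishes at a uniformly random point of `Sⁿ` is at most
`d / |S|`. -/
theorem stmt5 {F : Type*} [Field F] [DecidableEq F] {n : ℕ}
    (f : MvPolynomial (Fin n) F) (hf : f ≠ 0) (S : Finset F) (hS : S.Nonempty) :
    ((Fintype.piFinset fun _ : Fin n => S).filter
        fun s => MvPolynomial.eval s f = 0).card ≤ f.totalDegree * S.card ^ (n - 1) := by
  have hSpos : 0 < S.card := Finset.card_pos.mpr hS
  cases n with
  | zero =>
    obtain ⟨c, rfl⟩ := MvPolynomial.C_surjective (Fin 0) f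
    have hc : c ≠ 0 := fun h => hf (by simp [h])
    have hemp : ((Fintype.piFinset fun _ : Fin 0 => S).filter
        fun s => MvPolynomial.eval s (MvPolynomial.C c) = 0) = ∅ :=
      Finset.filter_eq_empty_iff.mpr fun s _ => by simpa using hc
    rw [hemp]
    simp
  | succ m =>
    have h := sz_aux S f hf
    have heq : f.totalDegree * S.card ^ (m + 1) = f.totalDegree * S.card ^ m * S.card := by ring
    rw [heq] at h
    exact Nat.le_of_mul_le_mul_right h hSpos
end

section
/- Let q be a prime power, m ≥ n ≥ 1, and let C ⊆ F_{q^m}^n be an F_q-linear subspace such that every nonzero vector in C has rank weight n (i.e., its entries are linearly independent over F_q). Then dim_{F_q} C ≤ m. -/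
/-- Singleton bound for rank-metric codes with δ = n: if every nonzero vector of an
`F_q`-linear code `C ⊆ F_{q^m}^n` has its entries linearly independent over `F_q`
(rank weight `n`), then `dim_{F_q} C ≤ m`. -/
theorem stmt7 {F K : Type*} [Field F] [Fintype F] [Field K] [Algebra F K]
    {m n : ℕ} (hm : Module.finrank F K = m) (hn : 1 ≤ n) (hnm : n ≤ m)
    (C : Submodule F (Fin n → K))
    (hC : ∀ c ∈ C, c ≠ 0 → LinearIndependent F c) :
    Module.finrank F ↥C ≤ m := by
  have hm1 : 1 ≤ m := le_trans hn hnm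
  have : FiniteDimensional F K := Module.finite_of_finrank_pos (by omega)
  let i0 : Fin n := ⟨0, hn⟩
  let f : C →ₗ[F] K := (LinearMap.proj i0).comp C.subtype
  have hf : Function.Injective f := by
    rw [← LinearMap.ker_eq_bot, LinearMap.ker_eq_bot']
    intro c hc
    by_contra hc0
    have hind := hC (c : Fin n → K) c.2 (fun h => hc0 (Subtype.ext h))
    exact hind.ne_zero i0 hc
  calc Module.finrank F ↥C ≤ Module.finrank F K :=
        LinearMap.finrank_le_finrank_of_injective hf
    _ = m := hm
end

section
/- Let q be a prime power, m ≥ n, ℓ = n − δ + 1 with 1 ≤ δ ≤ n, and suppose G = (I_ℓ | A) ∈ F_{q^m}^{ℓ×n} generates an F_{q^m}-linear rank-metric code of rank distance n − ℓ + 1 (an MRD code). Write A = (a_{ij}). Then for each column index j, the ℓ+1 elements 1, a_{1j}, ..., a_{ℓj} of F_{q^m} are linearly independent over F_q. In particular a_{ij} ∉ F_q for all i, j. -/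
lemma aux_finrank_span_range_le {F K : Type*} [Field F] [AddCommGroup K] [Module F K]
    {n : ℕ} (v : Fin n → K) :
    Module.finrank F (Submodule.span F (Set.range v)) ≤ n := by
  classical
  refine (finrank_span_le_card _).trans ?_
  calc (Set.range v).toFinset.card = Fintype.card (Set.range v) := by rw [Set.toFinset_card]
    _ ≤ n := by simpa using Fintype.card_range_le v

/-- If `G = (I_ℓ | A)` generates an `F_{q^m}`-linear MRD code in `F_{q^m}^n`
(`n = ℓ + d`, rank distance `n − ℓ + 1 = d + 1`), then for each column `j` the
`ℓ+1` elements `1, a_{1j}, …, a_{ℓj}` are linearly independent over `F_q`; in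
particular no entry of `A` lies in `F_q`. -/
theorem stmt9 {F K : Type*} [Field F] [Fintype F] [Field K] [Algebra F K]
    [FiniteDimensional F K] {m ℓ d : ℕ} (hm : Module.finrank F K = m)
    (hnm : ℓ + d ≤ m)
    (A : Matrix (Fin ℓ) (Fin d) K)
    (hMRD : ∀ u : Fin ℓ → K, u ≠ 0 →
      d + 1 ≤ Module.finrank F
        (Submodule.span F (Set.range (Fin.append u (Matrix.vecMul u A))))) :
    (∀ j : Fin d, LinearIndependent F (Fin.cons (1 : K) fun i : Fin ℓ => A i j)) ∧
    ∀ i j, A i j ∉ Set.range (algebraMap F K) := by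
  classical
  have main : ∀ j : Fin d, LinearIndependent F (Fin.cons (1 : K) fun i : Fin ℓ => A i j) := by
    intro j
    by_contra hLI
    rw [Fintype.not_linearIndependent_iff] at hLI
    obtain ⟨g, hsum, i₀, hi₀⟩ := hLI
    set u : Fin ℓ → K := fun i => algebraMap F K (g i.succ) with hu
    rw [Fin.sum_univ_succ] at hsum
    simp only [Fin.cons_zero, Fin.cons_succ] at hsum
    have hune : u ≠ 0 := by
      intro h0
      have hz : ∀ i : Fin ℓ, g i.succ = 0 := by
        intro i
        have := congrFun h0 i
        simpa [hu] using this
      have hg0 : g 0 = 0 := by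
        have h1 : (g 0 : F) • (1 : K) = 0 := by
          rw [← hsum]
          have : ∀ i : Fin ℓ, g i.succ • A i j = 0 := fun i => by rw [hz i, zero_smul]
          simp [this]
        simpa [Algebra.smul_def] using h1
      refine hi₀ ?_
      rcases Fin.eq_zero_or_eq_succ i₀ with h | ⟨k, rfl⟩
      · rw [h]; exact hg0
      · exact hz k
    have hd := hMRD u hune
    have hcol : Matrix.vecMul u A j = algebraMap F K (- g 0) := by
      have hs : ∑ i : Fin ℓ, g i.succ • A i j = - (g 0 • (1 : K)) := by
        rw [eq_neg_iff_add_eq_zero, add_comm]; exact hsum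
      have : Matrix.vecMul u A j = ∑ i : Fin ℓ, g i.succ • A i j := by
        simp [Matrix.vecMul, dotProduct, hu, Algebra.smul_def]
      rw [this, hs, map_neg, Algebra.smul_def, mul_one]
    set v : Fin d → K := fun k => if k = j then 1 else Matrix.vecMul u A k with hv
    have h1 : (1 : K) ∈ Submodule.span F (Set.range v) :=
      Submodule.subset_span ⟨j, by simp [hv]⟩
    have hle : Submodule.span F (Set.range (Fin.append u (Matrix.vecMul u A))) ≤
        Submodule.span F (Set.range v) := by
      rw [Submodule.span_le]
      rintro x ⟨k, rfl⟩
      induction k using Fin.addCases with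
      | left i =>
        rw [Fin.append_left]
        have : u i = g i.succ • (1 : K) := by simp [hu, Algebra.smul_def]
        rw [this]
        exact Submodule.smul_mem _ _ h1
      | right k =>
        rw [Fin.append_right]
        by_cases hk : k = j
        · rw [hk, hcol]
          have : algebraMap F K (- g 0) = (- g 0) • (1 : K) := by
            simp [Algebra.smul_def]
          rw [this]
          exact Submodule.smul_mem _ _ h1
        · exact Submodule.subset_span ⟨k, by simp [hv, hk]⟩
    have hfin : Module.finrank F
        (Submodule.span F (Set.range (Fin.append u (Matrix.vecMul u A)))) ≤ d :=
      le_trans (Submodule.finrank_mono hle) (aux_finrank_span_range_le v)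
    omega
  refine ⟨main, ?_⟩
  intro i j ⟨c, hc⟩
  have := main j
  rw [Fintype.linearIndependent_iff] at this
  set g : Fin (ℓ + 1) → F := fun k => if k = 0 then c else if k = i.succ then -1 else 0 with hg
  have hzero : ∑ k, g k • (Fin.cons (1 : K) (fun i : Fin ℓ => A i j) : Fin (ℓ+1) → K) k = (0 : K) := by
    rw [Fin.sum_univ_succ]
    simp only [Fin.cons_zero, Fin.cons_succ, hg]
    have : ∀ k : Fin ℓ, ((if (k.succ : Fin (ℓ+1)) = 0 then c else if k.succ = i.succ then -1 else 0 : F)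
        • A k j : K) = (if k = i then - A k j else 0 : K) := by
      intro k
      simp only [Fin.succ_ne_zero, if_false, Fin.succ_inj]
      by_cases hk : k = i <;> simp [hk]
    rw [Finset.sum_congr rfl (fun k _ => this k)]
    simp [Algebra.smul_def, hc]
  have := this g hzero i.succ
  simp [hg, Fin.succ_ne_zero] at this
end

section
/- Let ℱ = [c_1,...,c_n] be an m×n Ferrers diagram (so 0 ≤ c_1 ≤ ... ≤ c_n ≤ m) and δ = n. Then ν_min(ℱ; n) = 0 if and only if c_t < t for some t ∈ {1,...,n}. -/
/-- For a Ferrers diagram with (0-based) column counts `c 0 ≤ … ≤ c (n−1)` and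
`δ = n`, one has `ν_min(ℱ;n) = 0` iff `c_t < t` for some column `t` (1-based),
i.e. `c t < t + 1` for some `t < n` in 0-based indexing. Here
`ν_j(ℱ;n) = Σ_{t=0}^{j} (c t ∸ j)` and `ν_min` is the minimum over `j < n`. -/
theorem stmt13 {n : ℕ} (hn : 1 ≤ n) (c : ℕ → ℕ)
    (hmono : ∀ s t, s ≤ t → t < n → c s ≤ c t) :
    (Finset.range n).inf' (Finset.nonempty_range_iff.mpr (by omega))
        (fun j => ∑ t ∈ Finset.range (j + 1), (c t - j)) = 0 ↔
      ∃ t < n, c t < t + 1 := by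
  rw [← Nat.le_zero, Finset.inf'_le_iff]
  constructor
  · rintro ⟨j, hj, hle⟩
    have h0 : ∑ t ∈ Finset.range (j + 1), (c t - j) = 0 := Nat.le_zero.mp hle
    have hterm := Finset.sum_eq_zero_iff.mp h0 j (by simp)
    exact ⟨j, Finset.mem_range.mp hj, by omega⟩
  · rintro ⟨t, ht, hct⟩
    refine ⟨t, Finset.mem_range.mpr ht, Nat.le_zero.mpr (Finset.sum_eq_zero ?_)⟩
    intro s hs
    have hst : s ≤ t := by simpa [Nat.lt_succ_iff] using Finset.mem_range.mp hs
    have := hmono s t hst ht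
    omega
end

section
/- Let ℱ = [c_1,...,c_n] be an m×n Ferrers diagram and δ ∈ {1,...,n} with ℓ = n−δ+1. If c_t ≥ n for all t = ℓ+1,...,n (i.e., the last δ−1 columns each have at least n dots), then ν_min(ℱ;δ) = ν_0(ℱ;δ) = Σ_{t=1}^{ℓ} c_t. -/
/-! Passing from `ν_0` to `ν_j` removes at most `j` dots from each of the first `ℓ` columns, i.e.
at most `jℓ` dots, and adds `j` further columns, each of which still has at least `ℓ` dots after
removing `j`; so `ν_j ≥ ν_0`, and the minimum is attained at `j = 0`. -/

open Finset

theorem sum_range_le_sum_range_add_tsub (c : ℕ → ℕ) (ℓ j : ℕ)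
    (h : ∀ i < j, ℓ + j ≤ c (ℓ + i)) :
    ∑ t ∈ range ℓ, c t ≤ ∑ t ∈ range (ℓ + j), (c t - j) := by
  calc ∑ t ∈ range ℓ, c t
      ≤ ∑ t ∈ range ℓ, ((c t - j) + j) := sum_le_sum fun t _ => le_tsub_add
    _ = ∑ t ∈ range ℓ, (c t - j) + ∑ _i ∈ range j, ℓ := by
      simp only [sum_add_distrib, sum_const, card_range, smul_eq_mul, mul_comm]
    _ ≤ ∑ t ∈ range ℓ, (c t - j) + ∑ i ∈ range j, (c (ℓ + i) - j) := by
      gcongr with i hi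
      exact Nat.le_sub_of_add_le (h i (mem_range.mp hi))
    _ = ∑ t ∈ range (ℓ + j), (c t - j) := (sum_range_add _ ℓ j).symm

theorem stmt14 {n δ : ℕ} (hδ1 : 1 ≤ δ) (hδn : δ ≤ n) (c : ℕ → ℕ)
    (hlast : ∀ t, n - δ + 1 ≤ t → t < n → n ≤ c t) :
    (Finset.range δ).inf' (Finset.nonempty_range_iff.mpr (by omega))
        (fun j => ∑ t ∈ Finset.range (n - δ + 1 + j), (c t - j)) =
      ∑ t ∈ Finset.range (n - δ + 1), c t := by
  refine le_antisymm ?_ (le_inf' _ _ fun j hj => ?_)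
  · simpa only [add_zero, tsub_zero] using inf'_le (fun j => ∑ t ∈ range (n - δ + 1 + j), (c t - j))
      (mem_range.mpr hδ1)
  · have hjδ : j < δ := mem_range.mp hj
    exact sum_range_le_sum_range_add_tsub c _ j fun i hi =>
      (by omega : n - δ + 1 + j ≤ n).trans (hlast _ (by omega) (by omega))
end

section
/- Let F be a field with |F| ≥ δ and let G_i ∈ F^{k_i × n_i} (for i in a finite index set) be matrices all of whose maximal (full-size) minors are nonzero, with n_i − k_i = δ − 1. Place each codeword v_i ∈ rowsp(G_i) on the diagonal D_{s_i} ∩ ℱ of an m×n matrix (distinct diagonals s_i, zero elsewhere), where |D_{s_i} ∩ ℱ| = n_i and ℱ contains no dots below the deepest used diagonal on the positions used. Then every nonzero matrix so obtained has rank at least δ; hence the resulting space of matrices is a Ferrers diagram code with rank distance at least δ and dimension Σ_i (n_i − δ + 1). -/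
lemma aux_rank17 {F : Type*} [Field F] {m n δ : ℕ} (A : Matrix (Fin m) (Fin n) F)
    (r : Fin δ → Fin m) (c : Fin δ → Fin n)
    (h : (A.submatrix r c).det ≠ 0) : δ ≤ A.rank := by
  classical
  have hP : ((1 : Matrix (Fin m) (Fin m) F).submatrix r (Equiv.refl (Fin m))) * A
      = A.submatrix r id := by
    rw [Matrix.one_submatrix_mul]; simp
  have hQ : (A.submatrix r id) * ((1 : Matrix (Fin n) (Fin n) F).submatrix (Equiv.refl (Fin n)) c)
      = A.submatrix r c := by
    rw [Matrix.mul_submatrix_one]; simp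
  have hrank : (A.submatrix r c).rank = δ := by
    rw [Matrix.rank_of_isUnit _ ((Matrix.isUnit_iff_isUnit_det _).2 (isUnit_iff_ne_zero.2 h)),
      Fintype.card_fin]
  calc δ = (A.submatrix r c).rank := hrank.symm
    _ ≤ (A.submatrix r id).rank := by rw [← hQ]; exact Matrix.rank_mul_le_left _ _
    _ ≤ A.rank := by rw [← hP]; exact Matrix.rank_mul_le_right _ _

lemma aux_vecMul17 {F : Type*} [Field F] {κ : Type*} [Fintype κ] [DecidableEq κ]
    {A : Matrix κ κ F} (hA : A.det ≠ 0) {u : κ → F}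
    (h : Matrix.vecMul u A = 0) : u = 0 := by
  have hU : IsUnit A.det := isUnit_iff_ne_zero.2 hA
  have h2 := congrArg (fun w => Matrix.vecMul w A⁻¹) h
  simpa [Matrix.vecMul_vecMul, Matrix.mul_nonsing_inv A hU] using h2

lemma aux_weight17 {F : Type*} [Field F] {kk nn δ : ℕ} (hδ1 : 1 ≤ δ) (hkn : nn = kk + (δ - 1))
    (G : Matrix (Fin kk) (Fin nn) F)
    (hMDS : ∀ cols : Fin kk → Fin nn, Function.Injective cols →
      (G.submatrix id cols).det ≠ 0)
    {u : Fin kk → F} (hu : Matrix.vecMul u G ≠ 0) :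
    ∃ T : Finset (Fin nn), T.card = δ ∧ ∀ t ∈ T, Matrix.vecMul u G t ≠ 0 := by
  classical
  have hwt : δ ≤ (Finset.univ.filter fun t => Matrix.vecMul u G t ≠ 0).card := by
    by_contra hlt
    push_neg at hlt
    have hcards := Finset.card_filter_add_card_filter_not
      (s := (Finset.univ : Finset (Fin nn))) (p := fun t => Matrix.vecMul u G t = 0)
    simp only [Finset.card_univ, Fintype.card_fin, ne_eq] at hcards hlt
    have hZcard : kk ≤ (Finset.univ.filter (fun t => Matrix.vecMul u G t = 0)).card := by
      omega
    obtain ⟨Z', hZ'sub, hZ'card⟩ := Finset.exists_subset_card_eq hZcard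
    set cols : Fin kk → Fin nn := fun t => Z'.orderEmbOfFin hZ'card t with hcols
    have hcinj : Function.Injective cols := (Z'.orderEmbOfFin hZ'card).injective
    have h0 : Matrix.vecMul u (G.submatrix id cols) = 0 := by
      funext t
      have heq : Matrix.vecMul u (G.submatrix id cols) t = Matrix.vecMul u G (cols t) := rfl
      rw [heq]
      have hmem := hZ'sub (Z'.orderEmbOfFin_mem hZ'card t)
      simpa using hmem
    have := aux_vecMul17 (hMDS cols hcinj) h0
    exact hu (by rw [this]; simp)
  obtain ⟨T, hTsub, hTcard⟩ := Finset.exists_subset_card_eq hwt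
  exact ⟨T, hTcard, fun t ht => (Finset.mem_filter.1 (hTsub ht)).2⟩



/-- MDS construction on the diagonals of a Ferrers diagram: let `|F| ≥ δ` and for
each index `i` let `G i` be a `k_i × n_i` matrix (`n_i − k_i = δ − 1`) all of whose
maximal minors are nonzero (an MDS generator matrix). Place the codeword
`v_i · G i` on the positions `e i` of the diagonal `D_{s_i} ∩ ℱ` (distinct
diagonals `s_i`, `|D_{s_i} ∩ ℱ| = n_i`, zero elsewhere), where `ℱ` has no dots
below the deepest used diagonal. Then every nonzero matrix so obtained is supported
on `ℱ` and has rank at least `δ`, and the assignment `v ↦ Φ v` is injective, so the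
resulting Ferrers diagram code has rank distance at least `δ` and dimension
`Σ_i k_i = Σ_i (n_i − δ + 1)`. -/
theorem stmt17 {F : Type*} [Field F] {m n δ : ℕ} (hδ1 : 1 ≤ δ)
    (hF : Nonempty (Fin δ ↪ F))
    (ℱ : Finset (Fin m × Fin n))
    (hright : ∀ p ∈ ℱ, ∀ j' : Fin n, p.2 ≤ j' → (p.1, j') ∈ ℱ)
    (htop : ∀ p ∈ ℱ, ∀ i' : Fin m, i' ≤ p.1 → (i', p.2) ∈ ℱ)
    {ι : Type*} [Fintype ι] [DecidableEq ι]
    (k nn : ι → ℕ) (hkn : ∀ i, nn i = k i + (δ - 1))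
    (G : ∀ i, Matrix (Fin (k i)) (Fin (nn i)) F)
    (hMDS : ∀ i (cols : Fin (k i) → Fin (nn i)), Function.Injective cols →
      ((G i).submatrix id cols).det ≠ 0)
    (s : ι → ℕ) (hs : Function.Injective s) (hsm : ∀ i, s i ∈ Finset.Icc 1 m)
    (e : ∀ i, Fin (nn i) → Fin m × Fin n)
    (hediag : ∀ i t, ((e i t).2 : ℕ) + s i = ((e i t).1 : ℕ) + n)
    (hemono : ∀ i, StrictMono fun t => ((e i t).1 : ℕ))
    (heF : ∀ i t, e i t ∈ ℱ)
    (hcard : ∀ i, (ℱ.filter fun p => (p.2 : ℕ) + s i = (p.1 : ℕ) + n).card = nn i)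
    (hdeep : ∀ p ∈ ℱ, ∃ i, (p.1 : ℕ) + n ≤ (p.2 : ℕ) + s i) :
    let Φ : (∀ i, Fin (k i) → F) → Matrix (Fin m) (Fin n) F := fun v =>
      Matrix.of fun a b =>
        ∑ i, ∑ t, if e i t = (a, b) then Matrix.vecMul (v i) (G i) t else 0
    (∀ v a b, Φ v a b ≠ 0 → (a, b) ∈ ℱ) ∧
    (∀ v, Φ v ≠ 0 → δ ≤ (Φ v).rank) ∧
    Function.Injective Φ := by
  classical
  intro Φ
  -- injectivity of the placement across indices
  have hptinj : ∀ i i' (t : Fin (nn i)) (t' : Fin (nn i')), e i t = e i' t' → i = i' := by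
    intro i i' t t' h
    apply hs
    have h1 := hediag i t
    have h2 := hediag i' t'
    have hfst : ((e i t).1 : ℕ) = ((e i' t').1 : ℕ) := by rw [h]
    have hsnd : ((e i t).2 : ℕ) = ((e i' t').2 : ℕ) := by rw [h]
    omega
  have htinj : ∀ i, Function.Injective (e i) := by
    intro i t t' h
    have : ((e i t).1 : ℕ) = ((e i t').1 : ℕ) := by rw [h]
    exact (hemono i).injective this
  -- the value of Φ v at a placed position
  have hval : ∀ (v : ∀ i, Fin (k i) → F) i t,
      Φ v (e i t).1 (e i t).2 = Matrix.vecMul (v i) (G i) t := by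
    intro v i t
    show (∑ i', ∑ t', if e i' t' = ((e i t).1, (e i t).2) then
        Matrix.vecMul (v i') (G i') t' else 0) = _
    rw [Finset.sum_eq_single i]
    · rw [Finset.sum_eq_single t]
      · simp
      · intro t' _ ht'
        rw [if_neg]
        intro h
        exact ht' (htinj i (by simpa using h))
      · simp
    · intro i' _ hi'
      apply Finset.sum_eq_zero
      intro t' _
      rw [if_neg]
      intro h
      exact hi' (hptinj i' i t' t (by simpa using h))
    · simp
  -- support of Φ v
  have hsupp : ∀ (v : ∀ i, Fin (k i) → F) a b, Φ v a b ≠ 0 →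
      ∃ i t, e i t = (a, b) ∧ Matrix.vecMul (v i) (G i) t ≠ 0 := by
    intro v a b hab
    by_contra hc
    push_neg at hc
    apply hab
    show (∑ i, ∑ t, if e i t = (a, b) then Matrix.vecMul (v i) (G i) t else 0) = 0
    apply Finset.sum_eq_zero
    intro i _
    apply Finset.sum_eq_zero
    intro t _
    split_ifs with h
    · exact hc i t h
    · rfl
  refine ⟨?_, ?_, ?_⟩
  · -- support in ℱ
    intro v a b hab
    obtain ⟨i, t, het, -⟩ := hsupp v a b hab
    rw [← het]
    exact heF i t
  · -- rank bound
    intro v hv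
    have hex : ∃ a b, Φ v a b ≠ 0 := by
      by_contra h
      push_neg at h
      apply hv
      ext a b
      simpa using h a b
    obtain ⟨a, b, hab⟩ := hex
    obtain ⟨i1, t1, -, hct⟩ := hsupp v a b hab
    have hS1 : Matrix.vecMul (v i1) (G i1) ≠ 0 := fun h => hct (by rw [h]; rfl)
    set S : Finset ι := Finset.univ.filter (fun i => Matrix.vecMul (v i) (G i) ≠ 0) with hSdef
    obtain ⟨i₀, hi₀S, hi₀max⟩ := S.exists_max_image s ⟨i1, by simp [hSdef, hS1]⟩
    have hc0 : Matrix.vecMul (v i₀) (G i₀) ≠ 0 := by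
      have := Finset.mem_filter.1 hi₀S
      exact this.2
    obtain ⟨T, hTcard, hTne⟩ := aux_weight17 hδ1 (hkn i₀) (G i₀) (hMDS i₀) hc0
    set σ : Fin δ → Fin (nn i₀) := fun j => T.orderEmbOfFin hTcard j with hσdef
    have hσmem : ∀ j, σ j ∈ T := fun j => T.orderEmbOfFin_mem hTcard j
    have hσmono : StrictMono σ := (T.orderEmbOfFin hTcard).strictMono
    set r : Fin δ → Fin m := fun j => (e i₀ (σ j)).1 with hrdef
    set cm : Fin δ → Fin n := fun j => (e i₀ (σ j)).2 with hcmdef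
    have hrmono : StrictMono fun j => ((r j : Fin m) : ℕ) := fun j j' h =>
      hemono i₀ (hσmono h)
    have hcmono : StrictMono fun j => ((cm j : Fin n) : ℕ) := by
      intro j j' h
      have h1 := hediag i₀ (σ j)
      have h2 := hediag i₀ (σ j')
      have := hrmono h
      simp only [hrdef, hcmdef] at *
      omega
    -- zero below the diagonal
    have hzero : ∀ j l : Fin δ, l < j → Φ v (r j) (cm l) = 0 := by
      intro j l hlj
      by_contra hne
      obtain ⟨i, t, het, hcti⟩ := hsupp v (r j) (cm l) hne
      have hiS : i ∈ S := by
        simp only [hSdef, Finset.mem_filter, Finset.mem_univ, true_and]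
        exact fun h => hcti (by rw [h]; rfl)
      have hsle : s i ≤ s i₀ := hi₀max i hiS
      have hd := hediag i t
      have hfst : ((e i t).1 : ℕ) = ((r j : Fin m) : ℕ) := by rw [het]
      have hsnd : ((e i t).2 : ℕ) = ((cm l : Fin n) : ℕ) := by rw [het]
      have hdj := hediag i₀ (σ j)
      have hcml : ((cm l : Fin n) : ℕ) < ((cm j : Fin n) : ℕ) := hcmono hlj
      simp only [hrdef, hcmdef] at *
      omega
    -- nonzero diagonal
    have hdiag : ∀ j : Fin δ, Φ v (r j) (cm j) ≠ 0 := by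
      intro j
      have := hval v i₀ (σ j)
      simp only [hrdef, hcmdef]
      rw [this]
      exact hTne _ (hσmem j)
    have hbt : ((Φ v).submatrix r cm).BlockTriangular id := by
      intro j l h
      exact hzero j l h
    have hdet : ((Φ v).submatrix r cm).det ≠ 0 := by
      rw [Matrix.det_of_upperTriangular hbt]
      exact Finset.prod_ne_zero_iff.2 fun j _ => hdiag j
    exact aux_rank17 (Φ v) r cm hdet
  · -- injectivity
    intro v w hvw
    have key : ∀ i, Matrix.vecMul (v i) (G i) = Matrix.vecMul (w i) (G i) := by
      intro i
      funext t
      rw [← hval v i t, ← hval w i t, hvw]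
    funext i
    have hker : Matrix.vecMul (v i - w i) (G i) = 0 := by
      rw [Matrix.sub_vecMul, key i, sub_self]
    have hk : k i ≤ nn i := by rw [hkn i]; omega
    set cols : Fin (k i) → Fin (nn i) := Fin.castLE hk with hcolsdef
    have hcinj : Function.Injective cols := Fin.castLE_injective hk
    have h0 : Matrix.vecMul (v i - w i) ((G i).submatrix id cols) = 0 := by
      funext t
      have heq : Matrix.vecMul (v i - w i) ((G i).submatrix id cols) t
          = Matrix.vecMul (v i - w i) (G i) (cols t) := rfl
      rw [heq, hker]
      rfl
    have := aux_vecMul17 (hMDS i cols hcinj) h0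
    exact sub_eq_zero.mp this
end
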